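/- arXiv:1711.10397 — 5 statements merged into one kernel-verified Lean document; each statement's English description precedes it below -/
import Mathlib

section
/- Let M ≥ 1, let k_1 < k_2 be elements of {0,…,M}, let n ≥ 1, and let β ∈ (1, β_n), where β_n is the unique root of x^{n+1} - x^n - 1 in (1,2). Let y = Π_β((k_2, k_1, k_2^{n-1})^∞) be the value of the β-expansion given by the periodic digit sequence repeating the block (k_2, k_1, k_2, …, k_2) of length n+1. Then y < k_1/β + k_2/(β(β-1)). -/
/-- Let `k₁ < k₂ ≤ M`, `n ≥ 1`, and `β ∈ (1, β_n)`, where `β_n` is the unique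
root of `x^(n+1) - x^n - 1` in `(1,2)`.  If `y = Π_β((k₂, k₁, k₂^(n-1))^∞)` is
the value of the β-expansion given by the periodic digit sequence repeating
the block `(k₂, k₁, k₂, …, k₂)` of length `n+1`, then
`y < k₁/β + k₂/(β(β-1))`. -/
theorem periodic_expansion_lt (M n : ℕ) (hM : 1 ≤ M) (hn : 1 ≤ n)
    (k₁ k₂ : ℕ) (hk : k₁ < k₂) (hk₂ : k₂ ≤ M)
    (βn : ℝ) (hmem : βn ∈ Set.Ioo (1 : ℝ) 2)
    (hroot : βn ^ (n + 1) - βn ^ n - 1 = 0)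
    (β : ℝ) (hβ : β ∈ Set.Ioo 1 βn)
    (a : ℕ → ℕ) (ha : ∀ i, a i = if i % (n + 1) = 1 then k₁ else k₂)
    (y : ℝ) (hy : y = ∑' i : ℕ, (a i : ℝ) / β ^ (i + 1)) :
    y < k₁ / β + k₂ / (β * (β - 1)) := by
  obtain ⟨h1β, hββn⟩ := hβ
  obtain ⟨h1βn, hβn2⟩ := hmem
  have hβ0 : 0 < β := by linarith
  set r : ℝ := β⁻¹ with hr_def
  have hr0 : 0 < r := by positivity
  have hr1 : r < 1 := by
    rw [hr_def]
    exact inv_lt_one_of_one_lt₀ h1β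
  have hrn1 : r ^ (n + 1) < 1 := pow_lt_one₀ hr0.le hr1 (by omega)
  have hrn0 : 0 < 1 - r ^ (n + 1) := by linarith
  have e1 : β * r = 1 := mul_inv_cancel₀ hβ0.ne'
  have hpown : (0:ℝ) < β ^ n := pow_pos hβ0 n
  have hβn_eq : βn ^ n * (βn - 1) = 1 := by
    have h := hroot
    rw [pow_succ] at h
    ring_nf at h ⊢
    linarith
  have hβpowlt : β ^ n < βn ^ n := pow_lt_pow_left₀ hββn hβ0.le (by omega)
  have hkey : β ^ n * (β - 1) < 1 := by nlinarith
  have hkeyβ : β ^ (n + 1) - 1 < β ^ n := by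
    have := pow_succ β n
    nlinarith
  have hkeyr : 1 - r ^ (n + 1) < r := by
    have hp : (0:ℝ) < β ^ (n + 1) := pow_pos hβ0 _
    have e2 : β ^ (n + 1) * r ^ (n + 1) = 1 := by
      rw [← mul_pow, e1, one_pow]
    have e3 : β ^ (n + 1) * r = β ^ n := by rw [pow_succ, mul_assoc, e1, mul_one]
    have h4 : β ^ (n + 1) * (1 - r ^ (n + 1)) < β ^ (n + 1) * r := by
      rw [mul_sub, e2, e3, mul_one]; exact hkeyβ
    exact lt_of_mul_lt_mul_left h4 hp.le
  -- sums
  have hgeo : Summable (fun i : ℕ => r ^ (i + 1)) := by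
    simpa [pow_succ] using (summable_geometric_of_lt_one hr0.le hr1).mul_right r
  have S1 : ∑' i : ℕ, r ^ (i + 1) = r * (1 - r)⁻¹ := by
    calc ∑' i : ℕ, r ^ (i + 1) = ∑' i : ℕ, r ^ i * r := by simp [pow_succ]
    _ = (∑' i : ℕ, r ^ i) * r := tsum_mul_right
    _ = (1 - r)⁻¹ * r := by rw [tsum_geometric_of_lt_one hr0.le hr1]
    _ = r * (1 - r)⁻¹ := mul_comm _ _
  set f : ℕ → ℝ := fun i => if i % (n + 1) = 1 then r ^ (i + 1) else 0 with hf_def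
  have hfle : ∀ i, f i ≤ r ^ (i + 1) := by
    intro i; rw [hf_def]; dsimp only; split
    · exact le_rfl
    · positivity
  have hfnn : ∀ i, 0 ≤ f i := by
    intro i; rw [hf_def]; dsimp only; split <;> positivity
  have hfsum : Summable f := Summable.of_nonneg_of_le hfnn hfle hgeo
  -- compute ∑ f via reindexing
  have hg : Function.Injective (fun j : ℕ => (n + 1) * j + 1) := by
    intro x y h
    simp only at h
    exact Nat.eq_of_mul_eq_mul_left (Nat.succ_pos n) (Nat.add_right_cancel h)
  have hsupp : Function.support f ⊆ Set.range (fun j : ℕ => (n + 1) * j + 1) := by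
    intro x hx
    rw [Function.mem_support, hf_def] at hx
    dsimp only at hx
    by_cases hc : x % (n + 1) = 1
    · refine ⟨x / (n + 1), ?_⟩
      simp only
      conv_rhs => rw [← Nat.div_add_mod x (n + 1)]
      rw [hc]
    · simp [hc] at hx
  have S2 : ∑' i : ℕ, f i = r ^ 2 * (1 - r ^ (n + 1))⁻¹ := by
    rw [← hg.tsum_eq hsupp]
    have hmod : ∀ j : ℕ, ((n + 1) * j + 1) % (n + 1) = 1 := by
      intro j
      rw [Nat.mul_add_mod]
      exact Nat.mod_eq_of_lt (by omega)
    have : ∀ j : ℕ, f ((n + 1) * j + 1) = (r ^ (n + 1)) ^ j * r ^ 2 := by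
      intro j
      rw [hf_def]
      dsimp only
      rw [if_pos (hmod j), ← pow_mul, ← pow_add]
    rw [tsum_congr this, tsum_mul_right,
      tsum_geometric_of_lt_one (by positivity) hrn1]
    ring
  -- express y
  have hpoint : ∀ i : ℕ, (a i : ℝ) / β ^ (i + 1)
      = (k₂ : ℝ) * r ^ (i + 1) - ((k₂ : ℝ) - k₁) * f i := by
    intro i
    rw [ha i, hf_def]
    dsimp only
    have hβpow : β ^ (i + 1) ≠ 0 := by positivity
    split
    · push_cast
      rw [div_eq_mul_inv, ← inv_pow]
      ring
    · push_cast
      rw [div_eq_mul_inv, ← inv_pow]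
      ring
  have hy2 : y = (k₂ : ℝ) * (r * (1 - r)⁻¹) - ((k₂ : ℝ) - k₁) * (r ^ 2 * (1 - r ^ (n + 1))⁻¹) := by
    rw [hy, tsum_congr hpoint, Summable.tsum_sub (hgeo.mul_left _) (hfsum.mul_left _),
      tsum_mul_left, tsum_mul_left, S1, S2]
  -- final inequality
  have h1r : 0 < 1 - r := by linarith
  have hd : (0:ℝ) < (k₂ : ℝ) - k₁ := by
    have : (k₁ : ℝ) < k₂ := by exact_mod_cast hk
    linarith
  have hβ1 : 0 < β - 1 := by linarith
  have hRHS : (k₁ : ℝ) / β + (k₂ : ℝ) / (β * (β - 1)) = (k₁ : ℝ) * r + (k₂ : ℝ) * (r ^ 2 * (1 - r)⁻¹) := by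
    rw [hr_def]
    field_simp
  rw [hy2, hRHS]
  have hsplit : (k₂ : ℝ) * (r * (1 - r)⁻¹) = (k₂ : ℝ) * r + (k₂ : ℝ) * (r ^ 2 * (1 - r)⁻¹) := by
    field_simp
    ring
  rw [hsplit]
  have hlast : ((k₂ : ℝ) - k₁) * r < ((k₂ : ℝ) - k₁) * (r ^ 2 * (1 - r ^ (n + 1))⁻¹) := by
    apply mul_lt_mul_of_pos_left _ hd
    have h5 : r < r ^ 2 / (1 - r ^ (n + 1)) := (lt_div_iff₀ hrn0).mpr (by nlinarith)
    simpa [div_eq_mul_inv] using h5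
  linarith
end

section
/- Let M ≥ 1, let k_1 < k_2 be elements of {0,…,M}, let n ≥ 1, and let β ∈ (1, (1+√5)/2). Let x = Π_β((k_1, k_2^n)^∞) be the value of the β-expansion given by the periodic digit sequence repeating the block (k_1, k_2, …, k_2) of length n+1 (one k_1 followed by n copies of k_2). Then k_2/β + k_1/(β(β-1)) < x. -/
set_option maxHeartbeats 1000000 in
/-- Let `k₁ < k₂ ≤ M`, `n ≥ 1`, and `β ∈ (1, (1+√5)/2)`.  If
`x = Π_β((k₁, k₂^n)^∞)` is the value of the β-expansion given by the periodic
digit sequence repeating the block `(k₁, k₂, …, k₂)` of length `n+1`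
(one `k₁` followed by `n` copies of `k₂`), then
`k₂/β + k₁/(β(β-1)) < x`. -/
theorem periodic_expansion_gt (M n : ℕ) (hM : 1 ≤ M) (hn : 1 ≤ n)
    (k₁ k₂ : ℕ) (hk : k₁ < k₂) (hk₂ : k₂ ≤ M)
    (β : ℝ) (hβ : β ∈ Set.Ioo 1 ((1 + Real.sqrt 5) / 2))
    (a : ℕ → ℕ) (ha : ∀ i, a i = if i % (n + 1) = 0 then k₁ else k₂)
    (x : ℝ) (hx : x = ∑' i : ℕ, (a i : ℝ) / β ^ (i + 1)) :
    k₂ / β + k₁ / (β * (β - 1)) < x := by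
  obtain ⟨hβ1, hβφ⟩ := hβ
  have hβ0 : (0 : ℝ) < β := by linarith
  have h5 : Real.sqrt 5 ^ 2 = 5 := Real.sq_sqrt (by norm_num)
  have hfib : β ^ 2 < β + 1 := by
    nlinarith [Real.sqrt_nonneg 5, sq_nonneg (Real.sqrt 5 - (2 * β - 1))]
  have hβ2 : β < 2 := by nlinarith
  -- abbreviations
  set r : ℝ := β⁻¹ with hrdef
  have hr0 : 0 < r := by positivity
  have hr1 : r < 1 := by
    rw [hrdef, inv_lt_one_iff₀]; right; exact hβ1
  set d : ℕ := k₂ - k₁ with hddef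
  have hd1 : 1 ≤ d := by omega
  have hdcast : (d : ℝ) = (k₂ : ℝ) - k₁ := by
    rw [hddef, Nat.cast_sub hk.le]
  have hd0 : (0 : ℝ) < d := by
    have : (1 : ℝ) ≤ d := by exact_mod_cast hd1
    linarith
  -- the two summable pieces
  have hgeo : Summable (fun i : ℕ => r ^ i) := summable_geometric_of_lt_one hr0.le hr1
  have hs1 : Summable (fun i : ℕ => (k₂ : ℝ) * r ^ (i + 1)) :=
    (hgeo.mul_left ((k₂ : ℝ) * r)).congr (fun i => by ring)
  set g : ℕ → ℝ := fun i => if i % (n + 1) = 0 then (d : ℝ) * r ^ (i + 1) else 0 with hgdef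
  have hgnonneg : ∀ i, 0 ≤ g i := by
    intro i; simp only [hgdef]
    split
    · positivity
    · exact le_rfl
  have hs2 : Summable g := by
    refine Summable.of_nonneg_of_le hgnonneg (f := fun i : ℕ => ((d : ℝ) * r) * r ^ i)
      (fun i => ?_) (hgeo.mul_left _)
    simp only [hgdef]
    split
    · apply le_of_eq; ring
    · positivity
  -- decompose the summand
  have hfun : (fun i : ℕ => (a i : ℝ) / β ^ (i + 1)) =
      fun i : ℕ => (k₂ : ℝ) * r ^ (i + 1) - g i := by
    funext i
    rw [ha i]
    simp only [hgdef]
    have hpow : r ^ (i + 1) = (β ^ (i + 1))⁻¹ := by rw [hrdef, inv_pow]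
    split
    · rw [hpow, hdcast, div_eq_mul_inv]; ring
    · rw [hpow, div_eq_mul_inv]; ring
  -- value of the second sum
  have hrn1 : r ^ (n + 1) < 1 := pow_lt_one₀ hr0.le hr1 (by omega)
  have hT2 : ∑' i, g i = (d : ℝ) * r / (1 - r ^ (n + 1)) := by
    have hinj : Function.Injective (fun j : ℕ => j * (n + 1)) := by
      intro a b hab
      simpa using Nat.eq_of_mul_eq_mul_right (by omega) hab
    have hsupp : Function.support g ⊆ Set.range (fun j : ℕ => j * (n + 1)) := by
      intro i hi
      simp only [hgdef, Function.mem_support] at hi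
      by_cases h : i % (n + 1) = 0
      · exact ⟨i / (n + 1), Nat.div_mul_cancel (Nat.dvd_of_mod_eq_zero h)⟩
      · simp [h] at hi
    have := hinj.tsum_eq (f := g) hsupp
    rw [← this]
    have : (fun j : ℕ => g (j * (n + 1))) =
        fun j : ℕ => ((d : ℝ) * r) * (r ^ (n + 1)) ^ j := by
      funext j
      simp only [hgdef]
      rw [if_pos (Nat.mul_mod_left _ _)]
      ring
    rw [this, tsum_mul_left, tsum_geometric_of_lt_one (by positivity) hrn1]
    rw [div_eq_mul_inv]
  have hT1 : ∑' i, (k₂ : ℝ) * r ^ (i + 1) = (k₂ : ℝ) * r / (1 - r) := by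
    have : (fun i : ℕ => (k₂ : ℝ) * r ^ (i + 1)) =
        fun i : ℕ => ((k₂ : ℝ) * r) * r ^ i := by
      funext i; ring
    rw [this, tsum_mul_left, tsum_geometric_of_lt_one hr0.le hr1, div_eq_mul_inv]
  have hxval : x = (k₂ : ℝ) * r / (1 - r) - (d : ℝ) * r / (1 - r ^ (n + 1)) := by
    rw [hx, hfun, Summable.tsum_sub hs1 hs2, hT1, hT2]
  -- convert to β form
  set P : ℝ := β ^ (n + 1) with hPdef
  have hP1 : 1 < P := one_lt_pow₀ hβ1 (by omega)
  have hP0 : 0 < P - 1 := by linarith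
  have hrP : r ^ (n + 1) = P⁻¹ := by rw [hrdef, inv_pow]
  have hβne : β ≠ 0 := ne_of_gt hβ0
  have hβ1ne : β - 1 ≠ 0 := by intro h; linarith [sub_eq_zero.mp h]
  have hPne : P ≠ 0 := by positivity
  have hPβ : β ^ n * β = P := by rw [hPdef, pow_succ]
  have e1 : (k₂ : ℝ) * r / (1 - r) = (k₂ : ℝ) / (β - 1) := by
    rw [hrdef]; field_simp
  clear_value P
  clear_value r d g
  clear hx hfun hgdef hgnonneg hs1 hs2 hgeo hT1 hT2 ha
  have hPinv : P⁻¹ < 1 := by rw [← hrP]; exact hrn1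
  have e2 : (d : ℝ) * r / (1 - r ^ (n + 1)) = (d : ℝ) * β ^ n / (P - 1) := by
    rw [hrP, hrdef, ← hPβ]
    have h1 : β ^ n * β - 1 ≠ 0 := by rw [hPβ]; intro h; nlinarith [sub_eq_zero.mp h]
    have h2 : β ^ n * β ≠ 0 := by rw [hPβ]; exact hPne
    field_simp
  -- the key inequality
  have hle : β ^ 2 ≤ P := by
    rw [hPdef]
    exact pow_le_pow_right₀ hβ1.le (by omega)
  have key : 1 < P * (2 - β) := by
    nlinarith [mul_pos (by linarith : (0:ℝ) < β - 1) (by linarith : (0:ℝ) < β + 1 - β ^ 2),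
      mul_nonneg (by linarith : (0:ℝ) ≤ P - β ^ 2) (by linarith : (0:ℝ) ≤ 2 - β)]
  have key2 : β ^ n / (P - 1) < 1 / (β * (β - 1)) := by
    rw [div_lt_div_iff₀ hP0 (mul_pos hβ0 (by linarith))]
    have hexp : β ^ n * (β * (β - 1)) = P * (β - 1) := by rw [← hPβ]; ring
    nlinarith [key, hexp]
  -- finish
  have i1 : (k₂ : ℝ) / (β - 1) = (k₂ : ℝ) / β + (k₂ : ℝ) / (β * (β - 1)) := by
    field_simp
    ring
  have hk₁R : (k₁ : ℝ) = (k₂ : ℝ) - d := by linarith [hdcast]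
  have hmul := mul_lt_mul_of_pos_left key2 hd0
  have e3 : (d : ℝ) * β ^ n / (P - 1) = (d : ℝ) * (β ^ n / (P - 1)) := by ring
  have e4 : (d : ℝ) * (1 / (β * (β - 1))) = (d : ℝ) / (β * (β - 1)) := by ring
  have e5 : (k₁ : ℝ) / (β * (β - 1)) = (k₂ : ℝ) / (β * (β - 1)) - (d : ℝ) / (β * (β - 1)) := by
    rw [hk₁R]; ring
  rw [hxval, e1, e2]
  linarith
end

section
/- For n ≥ 1, let Δ_{M,1/(n+1)} be the set of vectors (p_0,…,p_M) ∈ ℝ^{M+1} with 0 ≤ p_k ≤ n/(n+1) for all k and Σ p_k = 1. For distinct k_1, k_2 ∈ {0,…,M}, let v_{n,k_1,k_2} ∈ ℝ^{M+1} be the vector whose k_1-entry is n/(n+1), whose k_2-entry is 1/(n+1), and all other entries are 0. Then Δ_{M,1/(n+1)} is contained in the convex hull of the finite set {v_{n,k_1,k_2} : k_1 ≠ k_2}. -/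
/-!
The capped simplex `{p | 0 ≤ p k ≤ u, ∑ p k = 1}` is compact and convex, so by Krein–Milman it is
the closed convex hull of its extreme points. At an extreme point at most one coordinate lies
strictly between `0` and `u`, since two such coordinates could be shifted against each other in
both directions. For `1/2 ≤ u < 1` the mass `1` can then only be filled by one coordinate `u`
and one coordinate `1 - u`; with `u = n/(n+1)` these are the vectors `v_{n,k₁,k₂}`.
-/

open Set Finset

lemma eq_zero_of_add_mem_of_sub_mem_of_mem_extremePoints {𝕜 E : Type*} [Field 𝕜]
    [LinearOrder 𝕜] [IsStrictOrderedRing 𝕜] [AddCommGroup E] [Module 𝕜 E] {A : Set E} {x v : E}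
    (hx : x ∈ A.extremePoints 𝕜) (hadd : x + v ∈ A) (hsub : x - v ∈ A) : v = 0 := by
  have hmid : x ∈ openSegment 𝕜 (x + v) (x - v) :=
    ⟨1 / 2, 1 / 2, by norm_num, by norm_num, by norm_num, by
      rw [← smul_add, add_add_sub_cancel, ← two_smul 𝕜 x, smul_smul]; norm_num⟩
  simpa using (mem_extremePoints.1 hx).2 _ hadd _ hsub hmid |>.1

def cappedSimplex (ι : Type*) [Fintype ι] (u : ℝ) : Set (ι → ℝ) :=
  stdSimplex ℝ ι ∩ univ.pi fun _ => Iic u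

def cappedSimplexVertex {ι : Type*} [DecidableEq ι] (u : ℝ) (k₁ k₂ : ι) : ι → ℝ :=
  fun j => if j = k₁ then u else if j = k₂ then 1 - u else 0

section CappedSimplex

variable {ι : Type*} [Fintype ι] {u : ℝ} {p : ι → ℝ}

lemma mem_cappedSimplex_iff :
    p ∈ cappedSimplex ι u ↔ (∀ k, 0 ≤ p k ∧ p k ≤ u) ∧ ∑ k, p k = 1 := by
  simp only [cappedSimplex, stdSimplex, Set.mem_inter_iff, Set.mem_ofPred_eq, Set.mem_pi,
    Set.mem_univ, Set.mem_Iic, true_imp_iff, forall_and]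
  tauto

variable (ι u) in
lemma convex_cappedSimplex : Convex ℝ (cappedSimplex ι u) :=
  (convex_stdSimplex ℝ ι).inter (convex_pi fun _ _ => convex_Iic u)

variable (ι u) in
lemma isCompact_cappedSimplex : IsCompact (cappedSimplex ι u) :=
  (isCompact_stdSimplex ℝ ι).inter_right (isClosed_set_pi fun _ _ => isClosed_Iic)

lemma add_single_sub_single_mem_cappedSimplex [DecidableEq ι] {i j : ι} {t : ℝ}
    (hp : p ∈ cappedSimplex ι u) (hij : i ≠ j) (hi : p i + t ∈ Icc 0 u)
    (hj : p j - t ∈ Icc 0 u) : p + (Pi.single i t - Pi.single j t) ∈ cappedSimplex ι u := by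
  obtain ⟨hbound, hsum⟩ := mem_cappedSimplex_iff.1 hp
  refine mem_cappedSimplex_iff.2 ⟨fun k => ?_, ?_⟩
  · rcases eq_or_ne k i with rfl | hki
    · simpa [hij] using hi
    rcases eq_or_ne k j with rfl | hkj
    · simpa [hki, sub_eq_add_neg] using hj
    · simpa [hki, hkj] using hbound k
  · simp [Finset.sum_add_distrib, hsum]

lemma notMem_Ioo_of_mem_extremePoints_cappedSimplex
    (hp : p ∈ (cappedSimplex ι u).extremePoints ℝ) {i j : ι} (hij : i ≠ j)
    (hi : p i ∈ Ioo 0 u) : p j ∉ Ioo 0 u := by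
  classical
  intro hj
  set ε := min (min (p i) (u - p i)) (min (p j) (u - p j))
  have hε : 0 < ε := by simp only [ε, lt_min_iff, sub_pos]; exact ⟨hi, hj⟩
  have hεi : ε ≤ p i ∧ ε ≤ u - p i := ⟨by simp [ε], by simp [ε]⟩
  have hεj : ε ≤ p j ∧ ε ≤ u - p j := ⟨by simp [ε], by simp [ε]⟩
  have hadd := add_single_sub_single_mem_cappedSimplex (t := ε) hp.1 hij
    ⟨by linarith, by linarith⟩ ⟨by linarith, by linarith⟩
  have hsub := add_single_sub_single_mem_cappedSimplex (t := ε) hp.1 hij.symm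
    ⟨by linarith, by linarith⟩ ⟨by linarith, by linarith⟩
  rw [← neg_sub, ← sub_eq_add_neg] at hsub
  have hεzero := congrFun (eq_zero_of_add_mem_of_sub_mem_of_mem_extremePoints hp hadd hsub) i
  simp only [Pi.sub_apply, Pi.single_eq_same, Pi.single_eq_of_ne hij, sub_zero,
    Pi.zero_apply] at hεzero
  exact hε.ne' hεzero

lemma exists_apply_eq_of_mem_extremePoints_cappedSimplex [Nonempty ι] (hu : u < 1)
    (hp : p ∈ (cappedSimplex ι u).extremePoints ℝ) : ∃ k, p k = u := by
  obtain ⟨hbound, hsum⟩ := mem_cappedSimplex_iff.1 hp.1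
  obtain ⟨k, hk⟩ := Finite.exists_max p
  refine ⟨k, (hbound k).2.eq_or_lt.resolve_right fun hlt => ?_⟩
  have hzero : ∀ j ≠ k, p j = 0 := fun j hjk => by
    by_contra hj
    have hj : 0 < p j := (hbound j).1.lt_of_ne' hj
    exact notMem_Ioo_of_mem_extremePoints_cappedSimplex hp hjk ⟨hj, (hk j).trans_lt hlt⟩
      ⟨hj.trans_le (hk j), hlt⟩
  rw [Fintype.sum_eq_single k hzero] at hsum
  linarith

lemma exists_eq_cappedSimplexVertex_of_mem_extremePoints [DecidableEq ι] [Nonempty ι]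
    (hu : 1 / 2 ≤ u) (hu₁ : u < 1) (hp : p ∈ (cappedSimplex ι u).extremePoints ℝ) :
    ∃ k₁ k₂ : ι, k₁ ≠ k₂ ∧ p = cappedSimplexVertex u k₁ k₂ := by
  obtain ⟨hbound, hsum⟩ := mem_cappedSimplex_iff.1 hp.1
  obtain ⟨k₁, hk₁⟩ := exists_apply_eq_of_mem_extremePoints_cappedSimplex hu₁ hp
  have hrest : ∑ j ∈ univ.erase k₁, p j = 1 - u := by
    rw [Finset.sum_erase_eq_sub (mem_univ k₁), hsum, hk₁]
  obtain ⟨k₂, hk₂, hk₂ne⟩ := exists_ne_zero_of_sum_ne_zero (hrest.trans_ne (by linarith))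
  have hk₂pos : 0 < p k₂ := (hbound k₂).1.lt_of_ne' hk₂ne
  have hne : k₁ ≠ k₂ := (ne_of_mem_erase hk₂).symm
  have hzero : ∀ j, j ≠ k₁ ∧ j ≠ k₂ → p j = 0 := by
    rintro j ⟨hj₁, hj₂⟩
    by_contra hj
    have hjpos : 0 < p j := (hbound j).1.lt_of_ne' hj
    -- Both lie in `(0, u)`: together they are at most `1 - u ≤ u`.
    have hpair : p k₂ + p j ≤ 1 - u := hrest ▸ add_le_sum (fun i _ => (hbound i).1) hk₂
      (mem_erase.2 ⟨hj₁, mem_univ j⟩) (Ne.symm hj₂)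
    exact notMem_Ioo_of_mem_extremePoints_cappedSimplex hp (Ne.symm hj₂)
      ⟨hk₂pos, by linarith⟩ ⟨hjpos, by linarith⟩
  have hk₂val : p k₂ = 1 - u := by
    rw [Fintype.sum_eq_add k₁ k₂ hne hzero, hk₁] at hsum
    linarith
  refine ⟨k₁, k₂, hne, funext fun j => ?_⟩
  unfold cappedSimplexVertex
  split_ifs with h₁ h₂
  · rw [h₁, hk₁]
  · rw [h₂, hk₂val]
  · exact hzero j ⟨h₁, h₂⟩

lemma cappedSimplex_subset_convexHull [DecidableEq ι] [Nonempty ι] (hu : 1 / 2 ≤ u)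
    (hu₁ : u < 1) : cappedSimplex ι u ⊆
      convexHull ℝ {v | ∃ k₁ k₂ : ι, k₁ ≠ k₂ ∧ v = cappedSimplexVertex u k₁ k₂} := by
  have hfinite : {v | ∃ k₁ k₂ : ι, k₁ ≠ k₂ ∧ v = cappedSimplexVertex u k₁ k₂}.Finite :=
    (finite_range fun k : ι × ι => cappedSimplexVertex u k.1 k.2).subset
      (by rintro _ ⟨k₁, k₂, -, rfl⟩; exact ⟨(k₁, k₂), rfl⟩)
  rw [← closure_convexHull_extremePoints (isCompact_cappedSimplex ι u) (convex_cappedSimplex ι u)]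
  exact closure_minimal (convexHull_mono fun p hp =>
    exists_eq_cappedSimplexVertex_of_mem_extremePoints hu hu₁ hp) (hfinite.isClosed_convexHull ℝ)

end CappedSimplex

theorem simplex_subset_convexHull_general (M n : ℕ) (hn : 1 ≤ n) :
    {p : Fin (M + 1) → ℝ |
        (∀ k, 0 ≤ p k ∧ p k ≤ (n : ℝ) / (n + 1)) ∧ ∑ k, p k = 1} ⊆
      convexHull ℝ
        {v : Fin (M + 1) → ℝ | ∃ k₁ k₂ : Fin (M + 1), k₁ ≠ k₂ ∧
          v = fun j => if j = k₁ then (n : ℝ) / (n + 1)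
                       else if j = k₂ then 1 / (n + 1) else 0} := by
  have hn' : (1 : ℝ) ≤ n := by exact_mod_cast hn
  have hhalf : 1 / 2 ≤ (n : ℝ) / (n + 1) := by
    rw [div_le_div_iff₀ (by norm_num) (by positivity)]; linarith
  have hlt : (n : ℝ) / (n + 1) < 1 := by rw [div_lt_one (by positivity)]; linarith
  have hcomp : 1 - (n : ℝ) / (n + 1) = 1 / (n + 1) := by field_simp; ring
  intro p hp
  have hmem := cappedSimplex_subset_convexHull hhalf hlt (mem_cappedSimplex_iff.2 hp)
  unfold cappedSimplexVertex at hmem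
  rwa [hcomp] at hmem

/-- For `M ≥ 1` and `n ≥ 1`, the set `Δ_{M,1/(n+1)}` of probability vectors in
`ℝ^{M+1}` with entries at most `n/(n+1)` is contained in the convex hull of
the vectors `v_{n,k₁,k₂}` (for `k₁ ≠ k₂`) whose `k₁`-entry is `n/(n+1)`,
whose `k₂`-entry is `1/(n+1)`, and whose other entries vanish. -/
theorem simplex_subset_convexHull (M n : ℕ) (hM : 1 ≤ M) (hn : 1 ≤ n) :
    {p : Fin (M + 1) → ℝ |
        (∀ k, 0 ≤ p k ∧ p k ≤ (n : ℝ) / (n + 1)) ∧ ∑ k, p k = 1} ⊆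
      convexHull ℝ
        {v : Fin (M + 1) → ℝ | ∃ k₁ k₂ : Fin (M + 1), k₁ ≠ k₂ ∧
          v = fun j => if j = k₁ then (n : ℝ) / (n + 1)
                       else if j = k₂ then 1 / (n + 1) else 0} :=
  simplex_subset_convexHull_general M n hn
end

section
/- Fix n ≥ 1 and ε = 1/(n+1). The extremal points of the compact convex set Δ_{M,ε} = {(p_k)_{k=0}^M : 0 ≤ p_k ≤ 1-ε, Σ p_k = 1} are exactly the vectors q_{ε,k_1,k_2} (for k_1 ≠ k_2) whose k_1-entry is 1-ε, whose k_2-entry is ε, and whose other entries are 0. -/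
/-!
An extreme point `p` of the truncated simplex `{p : 0 ≤ p k ≤ c, ∑ p k = 1}` has at most one
coordinate strictly between `0` and `c`: mass can be moved back and forth between two such
coordinates. With `c = 1 - ε < 1` there are two positive coordinates, so one of them equals
`1 - ε`; the remaining mass `ε ≤ 1 - ε` then leaves room for only one more nonzero coordinate,
which must be `ε`. Conversely, at the vertices `q_{ε,k₁,k₂}` every coordinate except the
`k₂`-th is an endpoint of `[0, 1 - ε]`, and the `k₂`-th one is determined by the sum.
-/

open Set Finset

theorem eq_zero_of_mem_extremePoints_of_add_mem_of_sub_mem {𝕜 E : Type*} [Field 𝕜]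
    [LinearOrder 𝕜] [IsStrictOrderedRing 𝕜] [AddCommGroup E] [Module 𝕜 E] {A : Set E}
    {p v : E} (hp : p ∈ A.extremePoints 𝕜) (h₁ : p + v ∈ A) (h₂ : p - v ∈ A) : v = 0 := by
  have hseg : p ∈ openSegment 𝕜 (p + v) (p - v) :=
    ⟨1 / 2, 1 / 2, by norm_num, by norm_num, by norm_num, by module⟩
  simpa using hp.2 h₁ h₂ hseg

theorem add_add_le_sum_of_nonneg {ι : Type*} [Fintype ι] [DecidableEq ι] {f : ι → ℝ}
    (hf : ∀ k, 0 ≤ f k) {i j k : ι} (hij : i ≠ j) (hik : i ≠ k) (hjk : j ≠ k) :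
    f i + f j + f k ≤ ∑ l, f l :=
  calc f i + f j + f k = ∑ l ∈ {i, j, k}, f l := by
        simp [Finset.sum_insert, hij, hik, hjk, add_assoc]
    _ ≤ ∑ l, f l := Finset.sum_le_univ_sum_of_nonneg hf

section TruncatedSimplex

variable {ι : Type*} [Fintype ι]

def truncatedSimplex (ι : Type*) [Fintype ι] (c : ℝ) : Set (ι → ℝ) :=
  {p | (∀ k, 0 ≤ p k ∧ p k ≤ c) ∧ ∑ k, p k = 1}

def truncatedVertex [DecidableEq ι] (ε : ℝ) (k₁ k₂ : ι) : ι → ℝ :=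
  fun j => if j = k₁ then 1 - ε else if j = k₂ then ε else 0

theorem exists_ne_pos_pos_of_mem_truncatedSimplex {c : ℝ} {p : ι → ℝ}
    (hp : p ∈ truncatedSimplex ι c) (hc : c < 1) : ∃ i j, i ≠ j ∧ 0 < p i ∧ 0 < p j := by
  by_contra! h
  obtain ⟨i, -, hi⟩ := Finset.exists_lt_of_sum_lt (s := Finset.univ) (f := 0) (g := p)
    (by simp [hp.2])
  have hsum : ∑ k, p k = p i :=
    Fintype.sum_eq_single i fun j hj => le_antisymm (h i j hj.symm hi) (hp.1 j).1
  linarith [hp.2, (hp.1 i).2]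

theorem add_single_sub_single_mem_truncatedSimplex [DecidableEq ι] {c : ℝ} {p : ι → ℝ}
    (hp : p ∈ truncatedSimplex ι c) {i j : ι} (hij : i ≠ j) {t : ℝ}
    (hi : p i + t ∈ Icc 0 c) (hj : p j - t ∈ Icc 0 c) :
    p + (Pi.single i t - Pi.single j t) ∈ truncatedSimplex ι c := by
  refine ⟨fun k => ?_, ?_⟩
  · by_cases hki : k = i
    · subst hki; simpa [hij, ← sub_eq_add_neg] using hi
    · by_cases hkj : k = j
      · subst hkj; simpa [hki, ← sub_eq_add_neg] using hj
      · simpa [hki, hkj] using hp.1 k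
  · simp [Finset.sum_add_distrib, Finset.sum_sub_distrib, hp.2]

theorem notMem_Ioo_of_mem_extremePoints_truncatedSimplex [DecidableEq ι] {c : ℝ}
    {p : ι → ℝ} (hp : p ∈ (truncatedSimplex ι c).extremePoints ℝ) {i j : ι} (hij : i ≠ j)
    (hi : p i ∈ Ioo 0 c) : p j ∉ Ioo 0 c := by
  intro hj
  obtain ⟨δ, hδ, hδi, hδi', hδj, hδj'⟩ :
      ∃ δ > 0, δ ≤ p i ∧ δ ≤ c - p i ∧ δ ≤ p j ∧ δ ≤ c - p j :=
    ⟨min (min (p i) (c - p i)) (min (p j) (c - p j)),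
      lt_min (lt_min hi.1 (sub_pos.2 hi.2)) (lt_min hj.1 (sub_pos.2 hj.2)),
      (min_le_left _ _).trans (min_le_left _ _), (min_le_left _ _).trans (min_le_right _ _),
      (min_le_right _ _).trans (min_le_left _ _), (min_le_right _ _).trans (min_le_right _ _)⟩
  have h₁ := add_single_sub_single_mem_truncatedSimplex hp.1 hij (t := δ)
    ⟨by linarith, by linarith⟩ ⟨by linarith, by linarith⟩
  have h₂ := add_single_sub_single_mem_truncatedSimplex hp.1 hij (t := -δ)
    ⟨by linarith, by linarith⟩ ⟨by linarith, by linarith⟩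
  rw [Pi.single_neg, Pi.single_neg, neg_sub_neg, ← neg_sub, ← sub_eq_add_neg] at h₂
  have hv := congrFun (eq_zero_of_mem_extremePoints_of_add_mem_of_sub_mem hp h₁ h₂) i
  simp only [Pi.sub_apply, Pi.single_eq_same, Pi.single_eq_of_ne hij, sub_zero,
    Pi.zero_apply] at hv
  linarith

theorem mem_extremePoints_truncatedSimplex_of_forall_ne {c : ℝ} {p : ι → ℝ}
    (hp : p ∈ truncatedSimplex ι c) (k : ι) (hk : ∀ j ≠ k, p j = 0 ∨ p j = c) :
    p ∈ (truncatedSimplex ι c).extremePoints ℝ := by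
  refine ⟨hp, fun x hx y hy hseg => ?_⟩
  have hc : 0 ≤ c := (hp.1 k).1.trans (hp.1 k).2
  have hcoord : ∀ j ≠ k, x j = p j := by
    intro j hj
    have hext : p j ∈ (Icc 0 c).extremePoints ℝ := by
      rw [extremePoints_Icc hc]
      exact hk j hj
    obtain ⟨a, b, ha, hb, hab, hpab⟩ := hseg
    exact hext.2 (hx.1 j) (hy.1 j) ⟨a, b, ha, hb, hab, congrFun hpab j⟩
  have hsum : ∑ j, (x - p) j = (x - p) k :=
    Fintype.sum_eq_single k fun j hj => sub_eq_zero.2 (hcoord j hj)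
  have hk : x k = p k := by
    simp only [Pi.sub_apply, Finset.sum_sub_distrib, hx.2, hp.2] at hsum
    linarith
  funext j
  by_cases hj : j = k
  · rw [hj, hk]
  · exact hcoord j hj

variable [DecidableEq ι] {ε : ℝ}

theorem truncatedVertex_mem_truncatedSimplex (hε₀ : 0 ≤ ε) (hε : ε ≤ 1 / 2) {k₁ k₂ : ι}
    (hne : k₁ ≠ k₂) : truncatedVertex ε k₁ k₂ ∈ truncatedSimplex ι (1 - ε) := by
  refine ⟨fun j => ?_, ?_⟩
  · unfold truncatedVertex
    split_ifs <;> constructor <;> linarith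
  · rw [Fintype.sum_eq_add k₁ k₂ hne fun j hj => by simp [truncatedVertex, hj.1, hj.2]]
    simp [truncatedVertex, hne.symm]

theorem truncatedVertex_mem_extremePoints (hε₀ : 0 ≤ ε) (hε : ε ≤ 1 / 2) {k₁ k₂ : ι}
    (hne : k₁ ≠ k₂) :
    truncatedVertex ε k₁ k₂ ∈ (truncatedSimplex ι (1 - ε)).extremePoints ℝ := by
  refine mem_extremePoints_truncatedSimplex_of_forall_ne
    (truncatedVertex_mem_truncatedSimplex hε₀ hε hne) k₂ fun j hj => ?_
  by_cases hj₁ : j = k₁ <;> simp [truncatedVertex, hj₁, hj]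

theorem eq_truncatedVertex {p : ι → ℝ} (hp : p ∈ truncatedSimplex ι (1 - ε)) {k₁ k₂ : ι}
    (hne : k₁ ≠ k₂) (hk₁ : p k₁ = 1 - ε) (hzero : ∀ j, j ≠ k₁ → j ≠ k₂ → p j = 0) :
    p = truncatedVertex ε k₁ k₂ := by
  have hk₂ : p k₂ = ε := by
    have := hp.2
    rw [Fintype.sum_eq_add k₁ k₂ hne fun j hj => hzero j hj.1 hj.2, hk₁] at this
    linarith
  funext j
  unfold truncatedVertex
  split_ifs with hj₁ hj₂
  · rw [hj₁, hk₁]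
  · rw [hj₂, hk₂]
  · exact hzero j hj₁ hj₂

theorem exists_eq_truncatedVertex_of_mem_extremePoints (hε₀ : 0 < ε) (hε : ε ≤ 1 / 2)
    {p : ι → ℝ} (hp : p ∈ (truncatedSimplex ι (1 - ε)).extremePoints ℝ) :
    ∃ k₁ k₂, k₁ ≠ k₂ ∧ p = truncatedVertex ε k₁ k₂ := by
  have hbound := hp.1.1
  obtain ⟨i, j, hij, hi, hj⟩ := exists_ne_pos_pos_of_mem_truncatedSimplex hp.1 (by linarith)
  wlog hci : p i = 1 - ε generalizing i j
  · refine this j i hij.symm hj hi ?_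
    by_contra hcj
    exact notMem_Ioo_of_mem_extremePoints_truncatedSimplex hp hij
      ⟨hi, (hbound i).2.lt_of_ne hci⟩ ⟨hj, (hbound j).2.lt_of_ne hcj⟩
  refine ⟨i, j, hij, eq_truncatedVertex hp.1 hij hci fun k hki hkj => ?_⟩
  have hsum := add_add_le_sum_of_nonneg (fun k => (hbound k).1) hij (Ne.symm hki) (Ne.symm hkj)
  rw [hp.1.2, hci] at hsum
  refine le_antisymm ?_ (hbound k).1
  rcases (hbound j).2.eq_or_lt with hcj | hcj
  · linarith
  · by_contra! hk
    exact notMem_Ioo_of_mem_extremePoints_truncatedSimplex hp (Ne.symm hkj) ⟨hj, hcj⟩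
      ⟨hk, by linarith⟩

theorem extremePoints_truncatedSimplex (hε₀ : 0 < ε) (hε : ε ≤ 1 / 2) :
    (truncatedSimplex ι (1 - ε)).extremePoints ℝ =
      {q | ∃ k₁ k₂, k₁ ≠ k₂ ∧ q = truncatedVertex ε k₁ k₂} := by
  ext p
  constructor
  · exact exists_eq_truncatedVertex_of_mem_extremePoints hε₀ hε
  · rintro ⟨k₁, k₂, hne, rfl⟩
    exact truncatedVertex_mem_extremePoints hε₀.le hε hne

end TruncatedSimplex

theorem extremePoints_of_truncated_simplex_general (M n : ℕ) (hn : 1 ≤ n)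
    (ε : ℝ) (hε : ε = 1 / (n + 1)) :
    Set.extremePoints ℝ
        {p : Fin (M + 1) → ℝ | (∀ k, 0 ≤ p k ∧ p k ≤ 1 - ε) ∧ ∑ k, p k = 1} =
      {q : Fin (M + 1) → ℝ | ∃ k₁ k₂ : Fin (M + 1), k₁ ≠ k₂ ∧
        q = fun j => if j = k₁ then 1 - ε else if j = k₂ then ε else 0} := by
  have hn' : (1 : ℝ) ≤ n := by exact_mod_cast hn
  have hε₀ : 0 < ε := by rw [hε]; positivity
  have hε_le : ε ≤ 1 / 2 := by
    rw [hε]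
    gcongr
    linarith
  exact extremePoints_truncatedSimplex hε₀ hε_le

/-- For `M ≥ 1`, `n ≥ 1` and `ε = 1/(n+1)`, the extreme points of the compact
convex set `Δ_{M,ε} = {(p_k) : 0 ≤ p_k ≤ 1-ε, Σ p_k = 1}` are exactly the
vectors `q_{ε,k₁,k₂}` (for `k₁ ≠ k₂`) whose `k₁`-entry is `1-ε`, whose
`k₂`-entry is `ε`, and whose other entries vanish. -/
theorem extremePoints_of_truncated_simplex (M n : ℕ) (hM : 1 ≤ M) (hn : 1 ≤ n)
    (ε : ℝ) (hε : ε = 1 / (n + 1)) :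
    Set.extremePoints ℝ
        {p : Fin (M + 1) → ℝ | (∀ k, 0 ≤ p k ∧ p k ≤ 1 - ε) ∧ ∑ k, p k = 1} =
      {q : Fin (M + 1) → ℝ | ∃ k₁ k₂ : Fin (M + 1), k₁ ≠ k₂ ∧
        q = fun j => if j = k₁ then 1 - ε else if j = k₂ then ε else 0} :=
  extremePoints_of_truncated_simplex_general M n hn ε hε
end

section
/- Let M ≥ 1, β ∈ (1, M+1], and let q = (q_0,…,q_M) be a probability vector with all q_k > 0, and let μ_q be the corresponding Bernoulli convolution. Let x ∈ [0, M/(β-1)] and suppose (a_i) ∈ {0,…,M}^ℕ satisfies Σ_{i=1}^∞ a_i/β^i = x and freq_k(a_i) = p_k for every k ∈ {0,…,M}. Then the upper local dimension of μ_q at x satisfies limsup_{r→0} log μ_q([x-r,x+r])/log r ≤ -Σ_{k=0}^M p_k log q_k / log β. -/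
/-!
The first `N` digits of `a` determine `Σ aᵢ/βⁱ` up to `M/((β-1)βᴺ)`, so the whole `N`-cylinder
of `a` is mapped into the interval of that radius around `x`, which therefore has `μ_q`-measure
at least `∏_{i≤N} q_{aᵢ} = exp(N (Σ_k p_k log q_k + o(1)))` by the frequency hypothesis. A general
radius `r` is compared with the radius of the scale `N = ⌊log_β(c/r)⌋`, `c = M/(β-1)`, at which
`log r ≈ -N log β`.
-/

open MeasureTheory Filter Finset Topology Real

section TailBound

variable {β B : ℝ} {b : ℕ → ℝ}

lemma summable_div_pow_succ (hβ : 1 < β) (hb0 : ∀ i, 0 ≤ b i) (hbB : ∀ i, b i ≤ B) :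
    Summable (fun i => b i / β ^ (i + 1)) := by
  have hgeo : Summable (fun i : ℕ => B / β * β⁻¹ ^ i) :=
    (summable_geometric_of_lt_one (by positivity) (inv_lt_one_of_one_lt₀ hβ)).mul_left _
  refine hgeo.of_nonneg_of_le (fun i => div_nonneg (hb0 i) (by positivity)) fun i => ?_
  rw [inv_pow, ← div_eq_mul_inv, div_div, ← pow_succ']
  exact div_le_div_of_nonneg_right (hbB i) (by positivity)

lemma tsum_div_pow_succ_mem_Icc (hβ : 1 < β) (hb0 : ∀ i, 0 ≤ b i) (hbB : ∀ i, b i ≤ B)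
    (N : ℕ) :
    ∑' i, b i / β ^ (i + 1) ∈ Set.Icc (∑ i ∈ range N, b i / β ^ (i + 1))
      (∑ i ∈ range N, b i / β ^ (i + 1) + B / (β - 1) / β ^ N) := by
  have hsum := summable_div_pow_succ hβ hb0 hbB
  have hterm : ∀ i, b (i + N) / β ^ (i + N + 1) ≤ B / β ^ (N + 1) * β⁻¹ ^ i := fun i => by
    rw [inv_pow, ← div_eq_mul_inv, div_div, ← pow_add, show N + 1 + i = i + N + 1 by omega]
    exact div_le_div_of_nonneg_right (hbB _) (by positivity)
  have hgeo : ∑' i, B / β ^ (N + 1) * β⁻¹ ^ i = B / (β - 1) / β ^ N := by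
    rw [tsum_mul_left, tsum_geometric_of_lt_one (by positivity) (inv_lt_one_of_one_lt₀ hβ)]
    have : β - 1 ≠ 0 := by linarith
    field_simp
    ring
  have htail_nonneg : 0 ≤ ∑' i, b (i + N) / β ^ (i + N + 1) :=
    tsum_nonneg fun i => div_nonneg (hb0 _) (by positivity)
  have htail_le : ∑' i, b (i + N) / β ^ (i + N + 1) ≤ B / (β - 1) / β ^ N :=
    hgeo ▸ ((summable_nat_add_iff N).2 hsum).tsum_le_tsum hterm
      ((summable_geometric_of_lt_one (by positivity) (inv_lt_one_of_one_lt₀ hβ)).mul_left _)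
  rw [← hsum.sum_add_tsum_nat_add N]
  constructor <;> linarith

end TailBound

noncomputable def betaProjection (β : ℝ) {M : ℕ} (a : ℕ → Fin (M + 1)) : ℝ :=
  ∑' i, ((a i : ℕ) : ℝ) / β ^ (i + 1)

section BetaProjection

variable {β : ℝ} {M : ℕ}

lemma measurable_betaProjection : Measurable (betaProjection β (M := M)) :=
  Measurable.tsum fun i =>
    (measurable_of_countable fun k : Fin (M + 1) => ((k : ℕ) : ℝ) / β ^ (i + 1)).comp
      (measurable_pi_apply i)

lemma abs_betaProjection_sub_le (hβ : 1 < β) {a b : ℕ → Fin (M + 1)} {N : ℕ}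
    (hab : ∀ i < N, a i = b i) :
    |betaProjection β a - betaProjection β b| ≤ M / (β - 1) / β ^ N := by
  have hdigit (c : ℕ → Fin (M + 1)) := tsum_div_pow_succ_mem_Icc hβ
    (fun i => Nat.cast_nonneg (c i : ℕ))
    (fun i => (Nat.cast_le.2 (Fin.is_le (c i)) : ((c i : ℕ) : ℝ) ≤ M)) N
  have hprefix : ∑ i ∈ range N, ((a i : ℕ) : ℝ) / β ^ (i + 1)
      = ∑ i ∈ range N, ((b i : ℕ) : ℝ) / β ^ (i + 1) :=
    sum_congr rfl fun i hi => by rw [hab i (mem_range.1 hi)]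
  obtain ⟨ha₁, ha₂⟩ := hdigit a
  obtain ⟨hb₁, hb₂⟩ := hdigit b
  rw [abs_sub_le_iff]
  unfold betaProjection
  constructor <;> linarith

lemma prod_le_measureReal_Icc_betaProjection (hβ : 1 < β) (P : Measure (ℕ → Fin (M + 1)))
    [IsFiniteMeasure P] {q : Fin (M + 1) → ℝ}
    (hP : ∀ (N : ℕ) (w : Fin N → Fin (M + 1)),
      (P {a | ∀ i : Fin N, a (i : ℕ) = w i}).toReal = ∏ i, q (w i))
    (a : ℕ → Fin (M + 1)) (N : ℕ) :
    ∏ i ∈ range N, q (a i) ≤ (P.map (betaProjection β)).real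
      (Set.Icc (betaProjection β a - M / (β - 1) / β ^ N)
        (betaProjection β a + M / (β - 1) / β ^ N)) := by
  have hcylinder : {b | ∀ i : Fin N, b (i : ℕ) = a i} ⊆
      betaProjection β ⁻¹' Set.Icc (betaProjection β a - M / (β - 1) / β ^ N)
        (betaProjection β a + M / (β - 1) / β ^ N) := fun b hb => by
    have := abs_betaProjection_sub_le hβ fun i hi => (hb ⟨i, hi⟩).symm
    rw [abs_sub_le_iff] at this
    exact ⟨by linarith, by linarith⟩
  rw [measureReal_def, Measure.map_apply measurable_betaProjection measurableSet_Icc,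
    ← Fin.prod_univ_eq_prod_range (fun i => q (a i)), ← hP]
  exact ENNReal.toReal_mono (measure_ne_top P _) (measure_mono hcylinder)

end BetaProjection

lemma tendsto_sum_range_div_of_tendsto_freq {α : Type*} [Fintype α] [DecidableEq α]
    {a : ℕ → α} {p : α → ℝ}
    (hfreq : ∀ k, Tendsto (fun N => (((range N).filter (fun i => a i = k)).card : ℝ) / N)
      atTop (𝓝 (p k)))
    (f : α → ℝ) :
    Tendsto (fun N => (∑ i ∈ range N, f (a i)) / N) atTop (𝓝 (∑ k, p k * f k)) := by
  have hfiber (N : ℕ) : (∑ i ∈ range N, f (a i)) / N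
      = ∑ k, (((range N).filter (fun i => a i = k)).card : ℝ) / N * f k := by
    rw [← sum_fiberwise (range N) a (fun i => f (a i)), sum_div]
    refine sum_congr rfl fun k _ => ?_
    rw [sum_congr rfl fun i hi => congrArg f (mem_filter.1 hi).2, sum_const, nsmul_eq_mul]
    ring
  simp_rw [hfiber]
  exact tendsto_finsetSum _ fun k _ => (hfreq k).mul_const _

lemma tendsto_succ_div_log_sub_mul_log {s : ℕ → ℝ} {L β c : ℝ} (hβ : 1 < β)
    (hs : Tendsto (fun N => s N / N) atTop (𝓝 L)) :
    Tendsto (fun n : ℕ => s (n + 1) / (log c - n * log β)) atTop (𝓝 (-L / log β)) := by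
  have hnum : Tendsto (fun n : ℕ => s (n + 1) / ((n : ℝ) + 1)) atTop (𝓝 L) := by
    refine (hs.comp (tendsto_add_atTop_nat 1)).congr fun n => ?_
    simp only [Function.comp_apply, Nat.cast_succ]
  have hden : Tendsto (fun n : ℕ => (log c - n * log β) / ((n : ℝ) + 1)) atTop
      (𝓝 (-log β)) := by
    have h := ((tendsto_one_div_add_atTop_nhds_zero_nat (𝕜 := ℝ)).const_mul
      (log c + log β)).sub_const (log β)
    rw [mul_zero, zero_sub] at h
    refine h.congr fun n => ?_
    field_simp
    ring
  have hlogβ : log β ≠ 0 := (log_pos hβ).ne'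
  convert hnum.div hden (neg_ne_zero.2 hlogβ) using 1
  · funext n
    exact (div_div_div_cancel_right₀ (by positivity) _ _).symm
  · rw [div_neg, neg_div]

lemma limsup_log_div_log_le {g : ℝ → ℝ} (hg_mono : Monotone g) (hg_le_one : ∀ r, g r ≤ 1)
    {β c L : ℝ} (hβ : 1 < β) (hc : 0 < c) {s : ℕ → ℝ}
    (hs : Tendsto (fun N => s N / N) atTop (𝓝 L)) (hgs : ∀ N, exp (s N) ≤ g (c / β ^ N)) :
    limsup (fun r => log (g r) / log r) (𝓝[>] 0) ≤ -L / log β := by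
  have hlogβ : 0 < log β := log_pos hβ
  -- the scale of `r`: `c / β ^ (n r + 1) < r ≤ c / β ^ n r` once `r ≤ c`
  set n : ℝ → ℕ := fun r => ⌊(log c - log r) / log β⌋₊
  have hn : Tendsto n (𝓝[>] 0) atTop := by
    refine tendsto_nat_floor_atTop.comp (Tendsto.atTop_div_const hlogβ ?_)
    exact (tendsto_atTop_add_const_left _ (log c)
      (tendsto_neg_atBot_atTop.comp tendsto_log_nhdsGT_zero)).congr fun r => by simp [sub_eq_add_neg]
  set h : ℕ → ℝ := fun N => s (N + 1) / (log c - N * log β)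
  have hsandwich : ∀ᶠ r in 𝓝[>] 0, 0 ≤ log (g r) / log r ∧ log (g r) / log r ≤ h (n r) := by
    filter_upwards [Ioo_mem_nhdsGT (lt_min hc (inv_pos.2 (by linarith : (0 : ℝ) < β)))]
      with r ⟨hr0, hr⟩
    have hrc : r ≤ c := (lt_of_lt_of_le hr (min_le_left _ _)).le
    have hrβ : log r + log β < 0 := by
      have := log_lt_log hr0 (lt_of_lt_of_le hr (min_le_right _ _))
      rw [log_inv] at this
      linarith
    have hfloor_le := Nat.floor_le (div_nonneg (sub_nonneg.2 (log_le_log hr0 hrc)) hlogβ.le)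
    have hlt_floor := Nat.lt_floor_add_one ((log c - log r) / log β)
    rw [le_div_iff₀ hlogβ] at hfloor_le
    rw [div_lt_iff₀ hlogβ] at hlt_floor
    have hradius : c / β ^ (n r + 1) ≤ r := by
      rw [← log_le_log_iff (by positivity) hr0, log_div hc.ne' (by positivity), log_pow]
      push_cast
      linarith
    have hg_pos : 0 < g r :=
      (exp_pos _).trans_le ((hgs (n r + 1)).trans (hg_mono hradius))
    have hlog_g : s (n r + 1) ≤ log (g r) :=
      (le_log_iff_exp_le hg_pos).2 ((hgs (n r + 1)).trans (hg_mono hradius))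
    have hlog_g_nonpos : log (g r) ≤ 0 := log_nonpos hg_pos.le (hg_le_one r)
    have hlog_r : log r < 0 := by linarith
    refine ⟨div_nonneg_of_nonpos hlog_g_nonpos hlog_r.le, ?_⟩
    rw [← neg_div_neg_eq (log (g r)), show h (n r) = -s (n r + 1) / -(log c - n r * log β)
      from (neg_div_neg_eq _ _).symm]
    exact div_le_div₀ (by linarith) (by linarith) (by linarith) (by linarith)
  have hlim : Tendsto (h ∘ n) (𝓝[>] 0) (𝓝 (-L / log β)) :=
    (tendsto_succ_div_log_sub_mul_log hβ hs).comp hn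
  calc limsup (fun r => log (g r) / log r) (𝓝[>] 0)
      ≤ limsup (h ∘ n) (𝓝[>] 0) :=
        limsup_le_limsup (hsandwich.mono fun _ hr => hr.2)
          (isCoboundedUnder_le_of_eventually_le _ (hsandwich.mono fun _ hr => hr.1))
          hlim.isBoundedUnder_le
    _ = -L / log β := hlim.limsup_eq

theorem upper_local_dimension_le_general (M : ℕ) (hM : 1 ≤ M) (β : ℝ)
    (hβ : β ∈ Set.Ioc (1 : ℝ) (M + 1))
    (q : Fin (M + 1) → ℝ) (hq0 : ∀ k, 0 < q k)
    (P : Measure (ℕ → Fin (M + 1))) [IsProbabilityMeasure P]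
    (hP : ∀ (N : ℕ) (w : Fin N → Fin (M + 1)),
      (P {a | ∀ i : Fin N, a (i : ℕ) = w i}).toReal = ∏ i, q (w i))
    (μ : Measure ℝ)
    (hμ : μ = P.map (fun a => ∑' i : ℕ, ((a i : ℕ) : ℝ) / β ^ (i + 1)))
    (x : ℝ)
    (a : ℕ → Fin (M + 1))
    (hax : ∑' i : ℕ, ((a i : ℕ) : ℝ) / β ^ (i + 1) = x)
    (p : Fin (M + 1) → ℝ)
    (hfreq : ∀ k, Tendsto
      (fun N => (((Finset.range N).filter (fun i => a i = k)).card : ℝ) / N)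
      atTop (nhds (p k))) :
    Filter.limsup
        (fun r => Real.log (μ (Set.Icc (x - r) (x + r))).toReal / Real.log r)
        (nhdsWithin 0 (Set.Ioi 0)) ≤
      -∑ k, p k * Real.log (q k) / Real.log β := by
  change μ = P.map (betaProjection β) at hμ
  change betaProjection β a = x at hax
  subst hμ hax
  have := Measure.isProbabilityMeasure_map (μ := P)
    (measurable_betaProjection (β := β)).aemeasurable
  have hμ_mono : Monotone fun r => (P.map (betaProjection β)).real
      (Set.Icc (betaProjection β a - r) (betaProjection β a + r)) := fun _ _ hr =>
    measureReal_mono (Set.Icc_subset_Icc (by linarith) (by linarith))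
  have hcylinder (N : ℕ) : exp (∑ i ∈ range N, log (q (a i))) ≤ (P.map (betaProjection β)).real
      (Set.Icc (betaProjection β a - M / (β - 1) / β ^ N)
        (betaProjection β a + M / (β - 1) / β ^ N)) := by
    rw [exp_sum, prod_congr rfl fun i _ => exp_log (hq0 (a i))]
    exact prod_le_measureReal_Icc_betaProjection hβ.1 P hP a N
  have hM_pos : (0 : ℝ) < M := by exact_mod_cast hM
  calc _ ≤ -(∑ k, p k * log (q k)) / log β :=
        limsup_log_div_log_le hμ_mono (fun _ => measureReal_le_one) hβ.1
          (div_pos hM_pos (by linarith [hβ.1])) (tendsto_sum_range_div_of_tendsto_freq hfreq _)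
          hcylinder
    _ = _ := by rw [neg_div, sum_div]

/-- Let `β ∈ (1, M+1]` and `q` a strictly positive probability vector on
`{0,…,M}`.  Let `ℙ_q` be the corresponding i.i.d. product measure on digit
sequences and `μ_q` the associated Bernoulli convolution (its pushforward under
`(a_i) ↦ Σ a_i/β^i`).  If `(a_i)` is a β-expansion of `x` whose digit `k`
frequency equals `p k` for every `k`, then the upper local dimension of `μ_q`
at `x` is at most `-Σ_k p_k log q_k / log β`. -/
theorem upper_local_dimension_le (M : ℕ) (hM : 1 ≤ M) (β : ℝ)
    (hβ : β ∈ Set.Ioc (1 : ℝ) (M + 1))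
    (q : Fin (M + 1) → ℝ) (hq0 : ∀ k, 0 < q k) (hq1 : ∑ k, q k = 1)
    (P : Measure (ℕ → Fin (M + 1))) [IsProbabilityMeasure P]
    (hP : ∀ (N : ℕ) (w : Fin N → Fin (M + 1)),
      (P {a | ∀ i : Fin N, a (i : ℕ) = w i}).toReal = ∏ i, q (w i))
    (μ : Measure ℝ)
    (hμ : μ = P.map (fun a => ∑' i : ℕ, ((a i : ℕ) : ℝ) / β ^ (i + 1)))
    (x : ℝ) (hx : x ∈ Set.Icc (0 : ℝ) ((M : ℝ) / (β - 1)))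
    (a : ℕ → Fin (M + 1))
    (hax : ∑' i : ℕ, ((a i : ℕ) : ℝ) / β ^ (i + 1) = x)
    (p : Fin (M + 1) → ℝ)
    (hfreq : ∀ k, Tendsto
      (fun N => (((Finset.range N).filter (fun i => a i = k)).card : ℝ) / N)
      atTop (nhds (p k))) :
    Filter.limsup
        (fun r => Real.log (μ (Set.Icc (x - r) (x + r))).toReal / Real.log r)
        (nhdsWithin 0 (Set.Ioi 0)) ≤
      -∑ k, p k * Real.log (q k) / Real.log β :=
  upper_local_dimension_le_general M hM β hβ q hq0 P hP μ hμ x a hax p hfreq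
end
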